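/- arXiv:1711.10805 — 2 statements merged into one kernel-verified Lean document; each statement's English description precedes it below -/
import Mathlib

section
/- Let a be a stable configuration and σ a G-strongly positive script. Then a is critical if and only if (a + σΔ)° = a. Moreover, if a is critical, then the firing script of the stabilization of a + σΔ equals σ. -/
/-- A finite directed multigraph without loops on `Fin (n+1)` with global sink `Fin.last n`. -/
structure SinkDigraph (n : ℕ) where
  e : Fin (n + 1) → Fin (n + 1) → ℕ
  loopless : ∀ i, e i i = 0
  sink_no_out : ∀ j, e (Fin.last n) j = 0
  path_to_sink : ∀ i, Relation.ReflTransGen (fun u v => 0 < e u v) i (Fin.last n)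

namespace SinkDigraph

variable {n : ℕ}

/-- Out-degree of a vertex. -/
def outDeg (G : SinkDigraph n) (i : Fin (n + 1)) : ℕ := ∑ j, G.e i j

/-- The (full) Laplacian matrix over ℤ. -/
def lap (G : SinkDigraph n) : Matrix (Fin (n + 1)) (Fin (n + 1)) ℤ :=
  Matrix.of fun i j => if i = j then (G.outDeg i : ℤ) else -(G.e i j : ℤ)

/-- The reduced Laplacian (rows/columns of the sink removed). -/
def redLap (G : SinkDigraph n) : Matrix (Fin n) (Fin n) ℤ :=
  Matrix.of fun i j => G.lap i.castSucc j.castSucc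

/-- The reduced Laplacian over ℚ. -/
def redLapQ (G : SinkDigraph n) : Matrix (Fin n) (Fin n) ℚ :=
  (G.redLap).map (Int.cast : ℤ → ℚ)

/-- A ℕ-script viewed as integer vector. -/
def natScript (σ : Fin n → ℕ) : Fin n → ℤ := fun i => (σ i : ℤ)

/-- Result of firing vertex `i` in configuration `a`. -/
def fire (G : SinkDigraph n) (a : Fin n → ℤ) (i : Fin n) : Fin n → ℤ :=
  fun j => a j - G.redLap i j

/-- Result of firing a sequence of vertices. -/
def applySeq (G : SinkDigraph n) : (Fin n → ℤ) → List (Fin n) → (Fin n → ℤ)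
  | a, [] => a
  | a, i :: s => G.applySeq (G.fire a i) s

/-- A firing sequence is legal from `a` if every fired vertex is active when fired. -/
def Legal (G : SinkDigraph n) : (Fin n → ℤ) → List (Fin n) → Prop
  | _, [] => True
  | a, i :: s => G.redLap i i ≤ a i ∧ G.Legal (G.fire a i) s

/-- The firing script of a firing sequence. -/
def script (s : List (Fin n)) : Fin n → ℤ := fun i => (s.count i : ℤ)

/-- A configuration is stable if it is non-negative and no vertex is active. -/
def IsStable (G : SinkDigraph n) (a : Fin n → ℤ) : Prop :=
  ∀ i, 0 ≤ a i ∧ a i < G.redLap i i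

/-- `b` is the stabilization of `a`. -/
def Stabilizes (G : SinkDigraph n) (a b : Fin n → ℤ) : Prop :=
  ∃ s : List (Fin n), G.Legal a s ∧ G.applySeq a s = b ∧ G.IsStable b

/-- The maximal stable configuration `c_max`. -/
def cmax (G : SinkDigraph n) : Fin n → ℤ := fun i => (G.outDeg i.castSucc : ℤ) - 1

/-- A stable configuration is critical if it is the stabilization of `c_max + c`
for some non-negative `c`. -/
def IsCritical (G : SinkDigraph n) (a : Fin n → ℤ) : Prop :=
  ∃ c : Fin n → ℤ, 0 ≤ c ∧ G.Stabilizes (G.cmax + c) a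

/-- `σΔ ≻ 0`, i.e. `σΔ` is non-negative and non-zero. -/
def GPositive (G : SinkDigraph n) (σ : Fin n → ℕ) : Prop :=
  0 ≤ Matrix.vecMul (natScript σ) G.redLap ∧ Matrix.vecMul (natScript σ) G.redLap ≠ 0

/-- Reachability along directed edges. -/
def Reach (G : SinkDigraph n) : Fin (n + 1) → Fin (n + 1) → Prop :=
  Relation.ReflTransGen (fun u v => 0 < G.e u v)

/-- A source component: a strongly connected component with no in-going edge from outside. -/
def IsSourceComponent (G : SinkDigraph n) (S : Set (Fin (n + 1))) : Prop :=
  (∃ i, S = {j | G.Reach i j ∧ G.Reach j i}) ∧ ∀ j ∉ S, ∀ k ∈ S, G.e j k = 0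

/-- A `G`-strongly positive script. -/
def GStronglyPositive (G : SinkDigraph n) (σ : Fin n → ℕ) : Prop :=
  G.GPositive σ ∧ ∀ S : Set (Fin (n + 1)), G.IsSourceComponent S →
    ∃ i : Fin n, i.castSucc ∈ S ∧ Matrix.vecMul (natScript σ) G.redLap i ≠ 0

/-- Linear equivalence of configurations. -/
def Equiv (G : SinkDigraph n) (a b : Fin n → ℤ) : Prop :=
  ∃ σ : Fin n → ℤ, b - a = Matrix.vecMul σ G.redLap

/-- The weight of a configuration. -/
def weight (a : Fin n → ℤ) : ℤ := ∑ i, a i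

/-- The energy (CFG) order: compare energy vectors `aΔ⁻¹` componentwise over ℚ. -/
def cfgLE (G : SinkDigraph n) (a b : Fin n → ℤ) : Prop :=
  Matrix.vecMul (fun i => (a i : ℚ)) (G.redLapQ)⁻¹ ≤
    Matrix.vecMul (fun i => (b i : ℚ)) (G.redLapQ)⁻¹

/-- A non-negative configuration is superstable if reverse-firing any nonzero ℕ-script
produces a negative component. -/
def IsSuperstable (G : SinkDigraph n) (a : Fin n → ℤ) : Prop :=
  0 ≤ a ∧ ∀ σ : Fin n → ℕ, σ ≠ 0 →
    ∃ i, a i - Matrix.vecMul (natScript σ) G.redLap i < 0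

end SinkDigraph

/-!
Everything rests on an exchange lemma for firing sequences: an active vertex must occur in every
stabilizing sequence and can be moved to its front, so any legal sequence continues legally to a
rearrangement of any stabilizing one. Hence stabilizations, and their scripts, are unique.

From a configuration `≥ c_max + τΔ` the script `τ ≥ 0` can be fired legally, since some vertex
of the support of `τ` gains under `τΔ`. If `a = (c_max + c)°`, firing `σ` from
`c_max + c + σΔ` and then stabilizing shows `(a + σΔ)° = a` with script `σ`. Conversely, strong
positivity forces `σ > 0` everywhere, and as `Δ` is nonsingular some `ρ` has `ρΔ ≥ c_max`; for
large `k` the configuration `a + kσΔ`, whose stabilization is still `a`, can fire `kσ - ρ`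
legally and reach `a + ρΔ ≥ c_max`.
-/

namespace SinkDigraph

open Matrix

variable {n : ℕ} (G : SinkDigraph n)

lemma redLap_apply (i j : Fin n) :
    G.redLap i j =
      (if i = j then (G.outDeg i.castSucc : ℤ) else 0) - G.e i.castSucc j.castSucc := by
  by_cases h : i = j
  · subst h; simp [redLap, lap, G.loopless]
  · simp [redLap, lap, h, Fin.castSucc_inj]

lemma redLap_apply_self (i : Fin n) : G.redLap i i = G.outDeg i.castSucc := by
  simp [redLap_apply, G.loopless]

lemma redLap_nonpos_of_ne {i j : Fin n} (h : i ≠ j) : G.redLap i j ≤ 0 := by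
  simp [redLap_apply, h]

lemma vecMul_redLap_apply (x : Fin n → ℤ) (j : Fin n) :
    (x ᵥ* G.redLap) j = x j * G.outDeg j.castSucc - ∑ p, x p * G.e p.castSucc j.castSucc := by
  simp [vecMul, dotProduct, redLap_apply, mul_sub, Finset.sum_sub_distrib]

lemma vecMul_redLap_nonpos_of_eq_zero {x : Fin n → ℤ} (hx : 0 ≤ x) {j : Fin n} (hj : x j = 0) :
    (x ᵥ* G.redLap) j ≤ 0 := by
  rw [vecMul_redLap_apply, hj, zero_mul, zero_sub, neg_nonpos]
  exact Finset.sum_nonneg fun p _ => mul_nonneg (hx p) (Int.natCast_nonneg _)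

lemma script_nil : script ([] : List (Fin n)) = 0 := rfl

lemma script_cons (i : Fin n) (s : List (Fin n)) : script (i :: s) = Pi.single i 1 + script s := by
  funext j
  by_cases h : j = i
  · subst h; simp [script, add_comm]
  · simp [script, h, Ne.symm h]

lemma script_append (s t : List (Fin n)) : script (s ++ t) = script s + script t := by
  funext j; simp [script]

lemma script_perm {s t : List (Fin n)} (h : s.Perm t) : script s = script t := by
  funext j; simp [script, h.count_eq]

lemma fire_eq_sub (a : Fin n → ℤ) (i : Fin n) : G.fire a i = a - G.redLap i := rfl

lemma applySeq_eq_sub_vecMul (a : Fin n → ℤ) (s : List (Fin n)) :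
    G.applySeq a s = a - script s ᵥ* G.redLap := by
  induction s generalizing a with
  | nil => simp [applySeq, script_nil]
  | cons i s ih =>
    ext j
    simp [applySeq, ih, fire_eq_sub, script_cons, add_vecMul]
    ring

lemma applySeq_append (a : Fin n → ℤ) (s t : List (Fin n)) :
    G.applySeq a (s ++ t) = G.applySeq (G.applySeq a s) t := by
  simp only [applySeq_eq_sub_vecMul, script_append, add_vecMul]
  abel

lemma applySeq_add (a y : Fin n → ℤ) (s : List (Fin n)) :
    G.applySeq (a + y) s = G.applySeq a s + y := by
  simp only [applySeq_eq_sub_vecMul]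
  abel

lemma applySeq_perm {s t : List (Fin n)} (h : s.Perm t) (a : Fin n → ℤ) :
    G.applySeq a s = G.applySeq a t := by
  simp only [applySeq_eq_sub_vecMul, script_perm h]

lemma legal_append {a : Fin n → ℤ} {s t : List (Fin n)} :
    G.Legal a (s ++ t) ↔ G.Legal a s ∧ G.Legal (G.applySeq a s) t := by
  induction s generalizing a with
  | nil => simp [Legal, applySeq]
  | cons i s ih => simp [Legal, applySeq, ih, and_assoc]

lemma fire_add (a y : Fin n → ℤ) (i : Fin n) : G.fire (a + y) i = G.fire a i + y := by
  simp only [fire_eq_sub]; abel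

variable {G} in
lemma Legal.add_nonneg {a y : Fin n → ℤ} {s : List (Fin n)} (hs : G.Legal a s) (hy : 0 ≤ y) :
    G.Legal (a + y) s := by
  induction s generalizing a with
  | nil => trivial
  | cons i s ih =>
    refine ⟨hs.1.trans (le_add_of_nonneg_right (hy i)), ?_⟩
    rw [G.fire_add]
    exact ih hs.2

lemma le_fire_of_ne (a : Fin n → ℤ) {i j : Fin n} (h : i ≠ j) : a j ≤ G.fire a i j := by
  simpa [fire_eq_sub] using G.redLap_nonpos_of_ne h

lemma fire_comm (a : Fin n → ℤ) (i j : Fin n) : G.fire (G.fire a i) j = G.fire (G.fire a j) i := by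
  simp only [fire_eq_sub]; abel

variable {G} in
lemma Legal.eq_nil_of_isStable {a : Fin n → ℤ} {s : List (Fin n)} (hs : G.Legal a s)
    (ha : G.IsStable a) : s = [] := by
  cases s with
  | nil => rfl
  | cons i s => exact absurd hs.1 (not_le.2 (ha i).2)

lemma mem_of_isStable_applySeq {a : Fin n → ℤ} {s : List (Fin n)}
    (hs : G.IsStable (G.applySeq a s)) {i : Fin n} (hi : G.redLap i i ≤ a i) : i ∈ s := by
  by_contra hmem
  have hfired : (script s ᵥ* G.redLap) i ≤ 0 :=
    G.vecMul_redLap_nonpos_of_eq_zero (fun j => Int.natCast_nonneg _)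
      (by simp [List.count_eq_zero_of_not_mem hmem])
  have := (hs i).2
  rw [applySeq_eq_sub_vecMul, Pi.sub_apply] at this
  omega

variable {G} in
/-- Firing an active vertex `i` commutes past the firings that precede its occurrence in `t`. -/
lemma Legal.cons_erase {a : Fin n → ℤ} {t : List (Fin n)} (ht : G.Legal a t) {i : Fin n}
    (hit : i ∈ t) (hi : G.redLap i i ≤ a i) : G.Legal a (i :: t.erase i) := by
  induction t generalizing a with
  | nil => cases hit
  | cons j t ih =>
    by_cases hji : j = i
    · subst hji
      simpa using ht
    · have hit' : i ∈ t := (List.mem_cons.1 hit).resolve_left (Ne.symm hji)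
      have hrest := ih ht.2 hit' (hi.trans (G.le_fire_of_ne a hji))
      rw [List.erase_cons_tail (by simpa using hji)]
      refine ⟨hi, ht.1.trans (G.le_fire_of_ne a (Ne.symm hji)), ?_⟩
      rw [G.fire_comm]
      exact hrest.2

variable {G} in
lemma Legal.exists_perm_append {a : Fin n → ℤ} {s t : List (Fin n)} (hs : G.Legal a s)
    (ht : G.Legal a t) (hstab : G.IsStable (G.applySeq a t)) :
    ∃ r, G.Legal (G.applySeq a s) r ∧ (s ++ r).Perm t := by
  induction s generalizing a t with
  | nil => exact ⟨t, ht, List.Perm.refl t⟩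
  | cons i s ih =>
    have hit := G.mem_of_isStable_applySeq hstab hs.1
    have hperm := List.perm_cons_erase hit
    have hstab' : G.IsStable (G.applySeq (G.fire a i) (t.erase i)) := by
      rwa [← applySeq, ← G.applySeq_perm hperm]
    obtain ⟨r, hr, hsr⟩ := ih hs.2 (ht.cons_erase hit hs.1).2 hstab'
    exact ⟨r, hr, (hsr.cons i).trans hperm.symm⟩

lemma perm_of_isStable {a : Fin n → ℤ} {s t : List (Fin n)} (hs : G.Legal a s)
    (hs' : G.IsStable (G.applySeq a s)) (ht : G.Legal a t) (ht' : G.IsStable (G.applySeq a t)) :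
    s.Perm t := by
  obtain ⟨r, hr, hsr⟩ := hs.exists_perm_append ht ht'
  rwa [hr.eq_nil_of_isStable hs', List.append_nil] at hsr

variable {G} in
lemma Legal.stabilizes_applySeq {a : Fin n → ℤ} {s t : List (Fin n)} (hs : G.Legal a s)
    (ht : G.Legal a t) (hstab : G.IsStable (G.applySeq a t)) :
    G.Stabilizes (G.applySeq a s) (G.applySeq a t) := by
  obtain ⟨r, hr, hsr⟩ := hs.exists_perm_append ht hstab
  exact ⟨r, hr, by rw [← applySeq_append, G.applySeq_perm hsr], hstab⟩

lemma sum_redLap_eq_sum_edges_out (S : Finset (Fin n)) {i : Fin n} (hi : i ∈ S) :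
    ∑ j ∈ S, G.redLap i j = ∑ w ∈ (S.map Fin.castSuccEmb)ᶜ, (G.e i.castSucc w : ℤ) := by
  have hdeg := Finset.sum_add_sum_compl (S.map Fin.castSuccEmb) (fun w => (G.e i.castSucc w : ℤ))
  rw [Finset.sum_map] at hdeg
  simp only [redLap_apply, Finset.sum_sub_distrib, Finset.sum_ite_eq, hi, if_true, outDeg,
    Nat.cast_sum, ← hdeg, Fin.castSuccEmb_apply]
  abel

lemma exists_edge_out (S : Finset (Fin n)) (hS : S.Nonempty) :
    ∃ i ∈ S, ∃ w ∉ S.map Fin.castSuccEmb, 0 < G.e i.castSucc w := by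
  by_contra! hclosed
  obtain ⟨i₀, hi₀⟩ := hS
  have hreach : ∀ w, G.Reach i₀.castSucc w → w ∈ S.map Fin.castSuccEmb := by
    intro w hw
    induction hw with
    | refl => exact Finset.mem_map_of_mem _ hi₀
    | tail _ hedge hmem =>
      obtain ⟨i, hi, rfl⟩ := Finset.mem_map.1 hmem
      by_contra hout
      exact (hclosed i hi _ hout).not_gt hedge
  obtain ⟨i, -, hi⟩ := Finset.mem_map.1 (hreach _ (G.path_to_sink i₀.castSucc))
  exact (Fin.castSucc_lt_last i).ne hi

lemma exists_pos_vecMul_redLap {τ : Fin n → ℤ} (hτ : 0 ≤ τ) (hτ0 : τ ≠ 0) :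
    ∃ v, 0 < τ v ∧ 0 < (τ ᵥ* G.redLap) v := by
  classical
  set S := Finset.univ.filter (fun v => 0 < τ v)
  have hS : S.Nonempty := by
    obtain ⟨v, hv⟩ : ∃ v, τ v ≠ 0 := by
      by_contra! h
      exact hτ0 (funext h)
    exact ⟨v, by simpa [S] using lt_of_le_of_ne (hτ v) (Ne.symm hv)⟩
  obtain ⟨i, hi, w, hw, hedge⟩ := G.exists_edge_out S hS
  have hterm : ∀ p ∈ Finset.univ, 0 ≤ τ p * ∑ j ∈ S, G.redLap p j := by
    intro p _
    by_cases hp : p ∈ S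
    · rw [G.sum_redLap_eq_sum_edges_out S hp]
      exact mul_nonneg (hτ p) (Finset.sum_nonneg fun _ _ => Int.natCast_nonneg _)
    · have hτp : τ p = 0 := le_antisymm (by simpa [S] using hp) (hτ p)
      simp [hτp]
  have hpos : 0 < ∑ v ∈ S, (τ ᵥ* G.redLap) v := calc
    0 < τ i * ∑ j ∈ S, G.redLap i j := by
      rw [G.sum_redLap_eq_sum_edges_out S hi]
      refine mul_pos (by simpa [S] using hi) (lt_of_lt_of_le ?_ (Finset.single_le_sum
        (fun _ _ => Int.natCast_nonneg _) (Finset.mem_compl.2 hw)))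
      exact_mod_cast hedge
    _ ≤ ∑ p, τ p * ∑ j ∈ S, G.redLap p j := Finset.single_le_sum hterm (Finset.mem_univ i)
    _ = ∑ v ∈ S, (τ ᵥ* G.redLap) v := by
      simp only [vecMul, dotProduct, Finset.mul_sum]
      exact Finset.sum_comm
  obtain ⟨v, hv, hv'⟩ := Finset.exists_lt_of_sum_lt (f := fun _ => (0 : ℤ)) (by simpa using hpos)
  exact ⟨v, by simpa [S] using hv, hv'⟩

lemma cmax_add_one (v : Fin n) : G.cmax v + 1 = G.redLap v v := by
  simp [cmax, redLap_apply_self]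

lemma exists_legal_script_eq_of_cmax_add_le {τ : Fin n → ℤ} (hτ : 0 ≤ τ) {x : Fin n → ℤ}
    (hx : G.cmax + τ ᵥ* G.redLap ≤ x) : ∃ s, G.Legal x s ∧ script s = τ := by
  obtain ⟨m, hm⟩ : ∃ m : ℕ, ∑ i, τ i = m :=
    ⟨(∑ i, τ i).toNat, (Int.toNat_of_nonneg (Finset.sum_nonneg fun i _ => hτ i)).symm⟩
  induction m generalizing τ x with
  | zero =>
    have hτ0 : τ = 0 := funext fun i =>
      (Finset.sum_eq_zero_iff_of_nonneg fun j _ => hτ j).1 hm i (Finset.mem_univ i)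
    exact ⟨[], trivial, hτ0 ▸ script_nil⟩
  | succ m ih =>
    have hτ0 : τ ≠ 0 := by rintro rfl; simp at hm; omega
    obtain ⟨v, hτv, hv⟩ := G.exists_pos_vecMul_redLap hτ hτ0
    have hact : G.redLap v v ≤ x v := by
      have := hx v
      simp only [Pi.add_apply] at this
      linarith [G.cmax_add_one v]
    set τ' := τ - Pi.single v 1
    have hτ' : 0 ≤ τ' := fun j => by
      by_cases h : j = v
      · subst h; simp [τ']; omega
      · simpa [τ', h] using hτ j
    have hsum : ∑ i, τ' i = m := by
      simp [τ', Finset.sum_sub_distrib, hm]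
    have hx' : G.cmax + τ' ᵥ* G.redLap ≤ G.fire x v := by
      intro j
      have := hx j
      simp only [τ', sub_vecMul, single_one_vecMul, fire_eq_sub, Pi.add_apply, Pi.sub_apply,
        Matrix.row_apply] at this ⊢
      linarith
    obtain ⟨s, hs, hsτ⟩ := ih hτ' hx' hsum
    exact ⟨v :: s, ⟨hact, hs⟩, by rw [script_cons, hsτ, add_sub_cancel]⟩

lemma redLap_mulVec_apply (v : Fin n → ℤ) (i : Fin n) :
    (G.redLap *ᵥ v) i = ∑ w, (G.e i.castSucc w : ℤ)
      * ((Fin.snoc v 0 : Fin (n + 1) → ℤ) i.castSucc - (Fin.snoc v 0 : Fin (n + 1) → ℤ) w) := by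
  simp [mulVec, dotProduct, redLap_apply, Fin.sum_univ_castSucc, outDeg, sub_mul, mul_sub,
    add_mul, Finset.sum_sub_distrib, Finset.sum_mul]

lemma nonpos_of_redLap_mulVec_eq_zero {v : Fin n → ℤ} (hv : G.redLap *ᵥ v = 0) (i : Fin n) :
    v i ≤ 0 := by
  -- maximum principle: `Fin.snoc v 0` is harmonic off the sink, so its maximum spreads along
  -- edges until it reaches the sink
  set W : Fin (n + 1) → ℤ := Fin.snoc v 0
  obtain ⟨u, -, hu⟩ := Finset.exists_max_image Finset.univ W ⟨Fin.last n, Finset.mem_univ _⟩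
  have hstep : ∀ p q, W p = W u → 0 < G.e p q → W q = W u := by
    intro p q hp hpq
    obtain ⟨j, rfl⟩ : ∃ j : Fin n, j.castSucc = p := by
      refine Fin.exists_castSucc_eq.2 fun hp => ?_
      simp [hp, G.sink_no_out] at hpq
    have hterms := (Finset.sum_eq_zero_iff_of_nonneg fun w _ =>
      mul_nonneg (Int.natCast_nonneg _) (sub_nonneg.2 ((hu w (Finset.mem_univ w)).trans hp.ge))).1
      ((G.redLap_mulVec_apply v j).symm.trans (congrFun hv j)) q (Finset.mem_univ q)
    rcases mul_eq_zero.1 hterms with h | h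
    · omega
    · rw [← hp]; exact (sub_eq_zero.1 h).symm
  have hsink : ∀ w, G.Reach u w → W w = W u := by
    intro w hw
    induction hw with
    | refl => rfl
    | tail _ hedge ih => exact hstep _ _ ih hedge
  calc v i = W i.castSucc := by simp [W]
    _ ≤ W u := hu _ (Finset.mem_univ _)
    _ = W (Fin.last n) := (hsink _ (G.path_to_sink u)).symm
    _ = 0 := by simp [W]

lemma det_redLap_ne_zero : G.redLap.det ≠ 0 := by
  intro h
  obtain ⟨v, hv0, hv⟩ := Matrix.exists_mulVec_eq_zero_iff.2 h
  have hneg : G.redLap *ᵥ (-v) = 0 := by rw [mulVec_neg, hv, neg_zero]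
  refine hv0 (funext fun i => le_antisymm (G.nonpos_of_redLap_mulVec_eq_zero hv i) ?_)
  simpa using G.nonpos_of_redLap_mulVec_eq_zero hneg i

lemma exists_le_vecMul_redLap (b : Fin n → ℤ) : ∃ ρ, b ≤ ρ ᵥ* G.redLap := by
  set d := G.redLap.det
  have hd : 1 ≤ d * d := by
    have := G.det_redLap_ne_zero
    nlinarith [mul_self_pos.2 this]
  refine ⟨(d • |b|) ᵥ* G.redLap.adjugate, fun i => ?_⟩
  rw [vecMul_vecMul, adjugate_mul, vecMul_smul, vecMul_one]
  simp only [Pi.smul_apply, Pi.abs_apply, smul_eq_mul]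
  nlinarith [le_abs_self (b i), abs_nonneg (b i)]

lemma exists_isSourceComponent_reach (v : Fin (n + 1)) :
    ∃ S, G.IsSourceComponent S ∧ ∀ w ∈ S, G.Reach w v := by
  classical
  let anc : Fin (n + 1) → Finset (Fin (n + 1)) := fun u => Finset.univ.filter (G.Reach · u)
  have mem_anc : ∀ w u, w ∈ anc u ↔ G.Reach w u := by simp [anc]
  obtain ⟨u, hu, hmin⟩ := Finset.exists_min_image (anc v) (fun u => (anc u).card)
    ⟨v, (mem_anc v v).2 .refl⟩
  have huv := (mem_anc u v).1 hu
  refine ⟨{j | G.Reach u j ∧ G.Reach j u}, ⟨⟨u, rfl⟩, fun j hj k hk => ?_⟩,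
    fun w hw => hw.2.trans huv⟩
  by_contra hjk
  have hju : G.Reach j u := .head (Nat.pos_of_ne_zero hjk) hk.2
  -- `u` was chosen with the fewest ancestors, but `j` has strictly fewer: it lacks `u` itself
  have hsub : anc j ⊂ anc u := (Finset.ssubset_iff_of_subset fun w hw =>
      (mem_anc w u).2 (((mem_anc w j).1 hw).trans hju)).2
    ⟨u, (mem_anc u u).2 .refl, fun h => hj ⟨(mem_anc u j).1 h, hju⟩⟩
  exact (hmin j ((mem_anc j v).2 (hju.trans huv))).not_gt (Finset.card_lt_card hsub)

lemma eq_zero_of_vecMul_redLap_nonneg {x : Fin n → ℤ} (hx : 0 ≤ x) (hxΔ : 0 ≤ x ᵥ* G.redLap)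
    {j p : Fin n} (hj : x j = 0) (hpj : 0 < G.e p.castSucc j.castSucc) : x p = 0 := by
  have hsum := hxΔ j
  rw [Pi.zero_apply, vecMul_redLap_apply, hj, zero_mul, zero_sub, neg_nonneg] at hsum
  have hterm := (Finset.sum_eq_zero_iff_of_nonneg fun q _ =>
    mul_nonneg (hx q) (Int.natCast_nonneg _)).1
    (le_antisymm hsum (Finset.sum_nonneg fun q _ => mul_nonneg (hx q) (Int.natCast_nonneg _)))
    p (Finset.mem_univ p)
  exact (mul_eq_zero.1 hterm).resolve_right (by omega)

lemma natScript_nonneg (σ : Fin n → ℕ) : 0 ≤ natScript σ := fun i => Int.natCast_nonneg (σ i)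

variable {G} in
lemma GStronglyPositive.pos {σ : Fin n → ℕ} (hσ : G.GStronglyPositive σ) (i : Fin n) :
    0 < σ i := by
  -- the zero set of `σ` is closed under predecessors, so it would contain a source component,
  -- on which `σΔ` vanishes
  by_contra! hi
  have hzero : ∀ w, G.Reach w i.castSucc → ∃ j : Fin n, j.castSucc = w ∧ natScript σ j = 0 := by
    intro w hw
    induction hw using Relation.ReflTransGen.head_induction_on with
    | refl => exact ⟨i, rfl, by simp [natScript]; omega⟩
    | @head u _ hedge _ ih =>
      obtain ⟨j, rfl, hj⟩ := ih
      obtain ⟨p, rfl⟩ : ∃ p : Fin n, p.castSucc = u :=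
        Fin.exists_castSucc_eq.2 fun h => by simp [h, G.sink_no_out] at hedge
      exact ⟨p, rfl, G.eq_zero_of_vecMul_redLap_nonneg (natScript_nonneg σ) hσ.1.1 hj hedge⟩
  obtain ⟨S, hS, hSi⟩ := G.exists_isSourceComponent_reach i.castSucc
  obtain ⟨j, hjS, hj⟩ := hσ.2 S hS
  obtain ⟨j', hj', hj0⟩ := hzero _ (hSi _ hjS)
  rw [Fin.castSucc_inj.1 hj'] at hj0
  exact hj (le_antisymm (G.vecMul_redLap_nonpos_of_eq_zero (natScript_nonneg σ) hj0) (hσ.1.1 j))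

variable {G} in
lemma Stabilizes.of_legal {a b : Fin n → ℤ} {s : List (Fin n)} (hs : G.Legal a s)
    (h : G.Stabilizes (G.applySeq a s) b) : G.Stabilizes a b := by
  obtain ⟨t, ht, htb, hb⟩ := h
  exact ⟨s ++ t, G.legal_append.2 ⟨hs, ht⟩, by rw [applySeq_append, htb], hb⟩

variable {G} in
lemma Stabilizes.add_nsmul {a u : Fin n → ℤ} (hu : 0 ≤ u) (h : G.Stabilizes (a + u) a) (k : ℕ) :
    G.Stabilizes (a + k • u) a := by
  obtain ⟨s, hs, hsa, hstab⟩ := h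
  induction k with
  | zero => exact ⟨[], trivial, by simp [applySeq], hstab⟩
  | succ k ih =>
    rw [succ_nsmul', ← add_assoc]
    refine Stabilizes.of_legal (hs.add_nonneg (nsmul_nonneg hu k)) ?_
    rwa [applySeq_add, hsa]

variable {G} in
lemma IsCritical.exists_legal_script_eq {a : Fin n → ℤ} (ha : G.IsCritical a) {σ : Fin n → ℤ}
    (hσ : 0 ≤ σ) (hσΔ : 0 ≤ σ ᵥ* G.redLap) :
    ∃ q, G.Legal (a + σ ᵥ* G.redLap) q ∧ G.applySeq (a + σ ᵥ* G.redLap) q = a ∧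
      script q = σ := by
  obtain ⟨c, hc, t, ht, hta, hstab⟩ := ha
  set x := G.cmax + c + σ ᵥ* G.redLap
  obtain ⟨s, hs, hsσ⟩ := G.exists_legal_script_eq_of_cmax_add_le hσ (x := x) fun v => by
    simpa [x] using hc v
  have hxs : G.applySeq x s = G.cmax + c := by
    rw [applySeq_eq_sub_vecMul, hsσ, add_sub_cancel_right]
  have hxt : G.applySeq x t = a + σ ᵥ* G.redLap := by rw [applySeq_add, hta]
  have hsta : G.applySeq x (s ++ t) = a := by rw [applySeq_append, hxs, hta]
  obtain ⟨q, hq, hperm⟩ := (ht.add_nonneg hσΔ).exists_perm_append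
    (G.legal_append.2 ⟨hs, hxs ▸ ht⟩) (hsta ▸ hstab)
  rw [hxt] at hq
  refine ⟨q, hq, ?_, ?_⟩
  · rw [← hxt, ← applySeq_append, G.applySeq_perm hperm, hsta]
  · have hscript := script_perm hperm
    rw [script_append, script_append, add_comm (script s)] at hscript
    rw [← hsσ]
    exact add_left_cancel hscript

lemma isCritical_of_stabilizes_add {a : Fin n → ℤ} (ha : 0 ≤ a) {σ : Fin n → ℤ}
    (hσ : ∀ i, 0 < σ i) (hσΔ : 0 ≤ σ ᵥ* G.redLap) (h : G.Stabilizes (a + σ ᵥ* G.redLap) a) :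
    G.IsCritical a := by
  obtain ⟨ρ, hρ⟩ := G.exists_le_vecMul_redLap G.cmax
  set k := ∑ i, (ρ i).toNat
  set x := a + k • σ ᵥ* G.redLap
  -- firing `kσ - ρ` from `x` lands on `a + ρΔ ≥ cmax`
  have hτ : 0 ≤ k • σ - ρ := fun i => by
    have hρk : (ρ i).toNat ≤ k :=
      Finset.single_le_sum (f := fun j => (ρ j).toNat) (fun j _ => Nat.zero_le _)
        (Finset.mem_univ i)
    show 0 ≤ k • σ i - ρ i
    rw [nsmul_eq_mul, sub_nonneg]
    nlinarith [hσ i, Int.self_le_toNat (ρ i)]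
  have hx : G.cmax + (k • σ - ρ) ᵥ* G.redLap ≤ x := by
    intro i
    have := hρ i
    simp only [x, sub_vecMul, smul_vecMul, Pi.add_apply, Pi.sub_apply] at this ⊢
    linarith [show 0 ≤ a i from ha i]
  obtain ⟨s, hs, hsτ⟩ := G.exists_legal_script_eq_of_cmax_add_le hτ hx
  have hy : G.applySeq x s = a + ρ ᵥ* G.redLap := by
    rw [applySeq_eq_sub_vecMul, hsτ, sub_vecMul, smul_vecMul]
    simp only [x]
    abel
  obtain ⟨t, ht, hta, hstab⟩ := h.add_nsmul hσΔ k
  refine ⟨G.applySeq x s - G.cmax, fun i => ?_, ?_⟩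
  · have := hρ i
    simp only [hy, Pi.zero_apply, Pi.sub_apply, Pi.add_apply]
    linarith [show 0 ≤ a i from ha i]
  · rw [add_sub_cancel, ← hta]
    exact hs.stabilizes_applySeq ht (hta ▸ hstab)

end SinkDigraph

open SinkDigraph Matrix

theorem critical_iff_recurrent (n : ℕ) (G : SinkDigraph n) (a : Fin n → ℤ)
    (ha : G.IsStable a) (σ : Fin n → ℕ) (hσ : G.GStronglyPositive σ) :
    (G.IsCritical a ↔ G.Stabilizes (a + Matrix.vecMul (natScript σ) G.redLap) a) ∧
      (G.IsCritical a →
        ∀ s : List (Fin n),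
          G.Legal (a + Matrix.vecMul (natScript σ) G.redLap) s →
          G.IsStable (G.applySeq (a + Matrix.vecMul (natScript σ) G.redLap) s) →
          script s = natScript σ) := by
  have hσΔ := hσ.1.1
  have hcrit (h : G.IsCritical a) := h.exists_legal_script_eq (natScript_nonneg σ) hσΔ
  refine ⟨⟨fun h => ?_, G.isCritical_of_stabilizes_add (fun i => (ha i).1)
    (fun i => Int.natCast_pos.2 (hσ.pos i)) hσΔ⟩, fun h s hs hstab => ?_⟩
  · obtain ⟨q, hq, hqa, -⟩ := hcrit h
    exact ⟨q, hq, hqa, hqa ▸ ha⟩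
  · obtain ⟨q, hq, hqa, hqσ⟩ := hcrit h
    rw [← hqσ]
    exact script_perm (G.perm_of_isStable hs hstab hq (by rwa [hqa]))
end

section
/- Let a be a critical configuration and let b be a stable configuration in the same linear equivalence class as a (i.e., b − a lies in the integer row span of Δ). Then w(a) ≥ w(b). -/
namespace SinkDigraph

open Matrix

variable {n : ℕ}

lemma redLap_diag (G : SinkDigraph n) (i : Fin n) :
    G.redLap i i = (G.outDeg i.castSucc : ℤ) := by
  simp [redLap, lap]

lemma redLap_offdiag (G : SinkDigraph n) {i j : Fin n} (h : i ≠ j) :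
    G.redLap i j = -(G.e i.castSucc j.castSucc : ℤ) := by
  have h2 : i.castSucc ≠ j.castSucc := by simpa using h
  simp [redLap, lap, h2, h]

lemma redLap_offdiag_nonpos (G : SinkDigraph n) {i j : Fin n} (h : i ≠ j) :
    G.redLap i j ≤ 0 := by
  rw [redLap_offdiag G h]
  simp

lemma outDeg_eq (G : SinkDigraph n) (i : Fin n) :
    (G.outDeg i.castSucc : ℤ) =
      (G.e i.castSucc (Fin.last n) : ℤ) + ∑ j : Fin n, (G.e i.castSucc j.castSucc : ℤ) := by
  have h : G.outDeg i.castSucc =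
      (∑ j : Fin n, G.e i.castSucc j.castSucc) + G.e i.castSucc (Fin.last n) := by
    rw [outDeg, Fin.sum_univ_castSucc]
  rw [h]; push_cast; ring

lemma redLap_row_sum (G : SinkDigraph n) (i : Fin n) :
    ∑ j, G.redLap i j = (G.e i.castSucc (Fin.last n) : ℤ) := by
  have key : ∀ j : Fin n, G.redLap i j =
      (if i = j then (G.outDeg i.castSucc : ℤ) else 0) - (G.e i.castSucc j.castSucc : ℤ) := by
    intro j
    by_cases h : i = j
    · subst h; rw [redLap_diag, G.loopless i.castSucc]; simp
    · rw [redLap_offdiag G h]; simp [h]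
  rw [Finset.sum_congr rfl fun j _ => key j, Finset.sum_sub_distrib,
    Finset.sum_ite_eq Finset.univ i (fun _ => (G.outDeg i.castSucc : ℤ))]
  simp [outDeg_eq G i]

/-- Minimum principle. -/
lemma minPrin (G : SinkDigraph n) (y : Fin n → ℚ)
    (h : ∀ k, 0 ≤ G.redLapQ.mulVec y k) : ∀ i, 0 ≤ y i := by
  by_contra hcon
  push_neg at hcon
  obtain ⟨i0, hi0⟩ := hcon
  have hne : (Finset.univ : Finset (Fin n)).Nonempty := ⟨i0, Finset.mem_univ _⟩
  set m : ℚ := Finset.univ.inf' hne y with hm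
  have hmle : ∀ j, m ≤ y j := fun j => Finset.inf'_le y (Finset.mem_univ j)
  have hmneg : m < 0 := lt_of_le_of_lt (hmle i0) hi0
  have closure : ∀ k : Fin n, y k = m →
      (G.e k.castSucc (Fin.last n) = 0 ∧
       ∀ j : Fin n, 0 < G.e k.castSucc j.castSucc → y j = m) := by
    intro k hk
    have step1 : G.redLapQ.mulVec y k =
        (G.outDeg k.castSucc : ℚ) * m - ∑ j : Fin n, (G.e k.castSucc j.castSucc : ℚ) * y j := by
      have key : ∀ j : Fin n, G.redLapQ k j * y j =
          (if k = j then (G.outDeg k.castSucc : ℚ) * m else 0)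
            - (G.e k.castSucc j.castSucc : ℚ) * y j := by
        intro j
        by_cases hkj : k = j
        · subst hkj
          simp [redLapQ, redLap_diag, G.loopless k.castSucc, hk]
        · simp [redLapQ, redLap_offdiag G hkj, hkj]
      calc G.redLapQ.mulVec y k = ∑ j, G.redLapQ k j * y j := rfl
        _ = ∑ j, ((if k = j then (G.outDeg k.castSucc : ℚ) * m else 0)
              - (G.e k.castSucc j.castSucc : ℚ) * y j) :=
            Finset.sum_congr rfl fun j _ => key j
        _ = _ := by
            rw [Finset.sum_sub_distrib,
              Finset.sum_ite_eq Finset.univ k (fun _ => (G.outDeg k.castSucc : ℚ) * m)]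
            simp
    have hod : (G.outDeg k.castSucc : ℚ) =
        (G.e k.castSucc (Fin.last n) : ℚ) + ∑ j : Fin n, (G.e k.castSucc j.castSucc : ℚ) := by
      exact_mod_cast congrArg (fun z : ℤ => (z : ℚ)) (outDeg_eq G k)
    have step2 : (G.e k.castSucc (Fin.last n) : ℚ) * m
          + ∑ j : Fin n, (G.e k.castSucc j.castSucc : ℚ) * (m - y j)
        = (G.outDeg k.castSucc : ℚ) * m
          - ∑ j : Fin n, (G.e k.castSucc j.castSucc : ℚ) * y j := by
      simp only [mul_sub]
      rw [Finset.sum_sub_distrib, ← Finset.sum_mul, hod]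
      ring
    have hpos : 0 ≤ (G.e k.castSucc (Fin.last n) : ℚ) * m
        + ∑ j : Fin n, (G.e k.castSucc j.castSucc : ℚ) * (m - y j) := by
      rw [step2, ← step1]; exact h k
    have hA : (G.e k.castSucc (Fin.last n) : ℚ) * m ≤ 0 :=
      mul_nonpos_of_nonneg_of_nonpos (by positivity) hmneg.le
    have hterm : ∀ j ∈ Finset.univ,
        (G.e k.castSucc j.castSucc : ℚ) * (m - y j) ≤ 0 := fun j _ =>
      mul_nonpos_of_nonneg_of_nonpos (by positivity) (by linarith [hmle j])
    have hB : ∑ j : Fin n, (G.e k.castSucc j.castSucc : ℚ) * (m - y j) ≤ 0 :=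
      Finset.sum_nonpos hterm
    have hA0 : (G.e k.castSucc (Fin.last n) : ℚ) * m = 0 := by linarith
    have hB0 : ∑ j : Fin n, (G.e k.castSucc j.castSucc : ℚ) * (m - y j) = 0 := by linarith
    constructor
    · have : (G.e k.castSucc (Fin.last n) : ℚ) = 0 := by
        rcases mul_eq_zero.mp hA0 with h1 | h1
        · exact h1
        · exact absurd h1 hmneg.ne
      exact_mod_cast this
    · intro j hj
      have := (Finset.sum_eq_zero_iff_of_nonpos hterm).mp hB0 j (Finset.mem_univ j)
      rcases mul_eq_zero.mp this with h1 | h1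
      · exact absurd (by exact_mod_cast h1 : G.e k.castSucc j.castSucc = 0) hj.ne'
      · linarith
  -- propagate along a path to the sink
  have prop : ∀ p q : Fin (n + 1), Relation.ReflTransGen (fun u v => 0 < G.e u v) p q →
      (∃ k : Fin n, p = k.castSucc ∧ y k = m) → (∃ k : Fin n, q = k.castSucc ∧ y k = m) := by
    intro p q hpq
    induction hpq with
    | refl => exact id
    | tail _ hedge ih =>
        intro hp
        obtain ⟨k, rfl, hk⟩ := ih hp
        obtain ⟨h0, hcl⟩ := closure k hk
        rename_i c hc
        -- hedge : 0 < G.e k.castSucc c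
        by_cases hlast : c = Fin.last n
        · subst hlast; rw [h0] at hedge; exact absurd hedge (lt_irrefl 0)
        · obtain ⟨j, rfl⟩ := Fin.exists_castSucc_eq.mpr hlast
          exact ⟨j, rfl, hcl j hedge⟩
  obtain ⟨k0, _, hk0⟩ := Finset.exists_mem_eq_inf' hne y
  have := prop k0.castSucc (Fin.last n) (G.path_to_sink k0.castSucc) ⟨k0, rfl, hk0.symm⟩
  obtain ⟨k, hkeq, _⟩ := this
  exact absurd hkeq.symm (Fin.castSucc_lt_last k).ne


lemma isUnit_redLapQ (G : SinkDigraph n) : IsUnit G.redLapQ := by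
  rw [← Matrix.mulVec_injective_iff_isUnit]
  intro y z hyz
  have h0 : G.redLapQ.mulVec (y - z) = 0 := by
    rw [Matrix.mulVec_sub, hyz, sub_self]
  have h1 : ∀ i, 0 ≤ (y - z) i := minPrin G (y - z) (fun k => by rw [h0]; rfl)
  have h0' : G.redLapQ.mulVec (z - y) = 0 := by
    rw [Matrix.mulVec_sub, hyz, sub_self]
  have h2 : ∀ i, 0 ≤ (z - y) i := minPrin G (z - y) (fun k => by rw [h0']; rfl)
  funext i
  have := h1 i
  have := h2 i
  simp only [Pi.sub_apply] at *
  linarith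

lemma redLapQ_mul_inv (G : SinkDigraph n) : G.redLapQ * (G.redLapQ)⁻¹ = 1 :=
  Matrix.mul_nonsing_inv _ ((Matrix.isUnit_iff_isUnit_det _).mp G.isUnit_redLapQ)

lemma inv_redLapQ_nonneg (G : SinkDigraph n) (i j : Fin n) : 0 ≤ (G.redLapQ)⁻¹ i j := by
  have h : ∀ k, 0 ≤ G.redLapQ.mulVec (fun l => (G.redLapQ)⁻¹ l j) k := by
    intro k
    have : G.redLapQ.mulVec (fun l => (G.redLapQ)⁻¹ l j) k
        = (G.redLapQ * (G.redLapQ)⁻¹) k j := rfl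
    rw [this, redLapQ_mul_inv]
    by_cases hkj : k = j <;> simp [Matrix.one_apply, hkj]
  exact minPrin G _ h i

lemma nonneg_of_vecMul_nonneg (G : SinkDigraph n) (v : Fin n → ℤ)
    (h : ∀ j, 0 ≤ Matrix.vecMul v G.redLap j) : ∀ i, 0 ≤ v i := by
  intro i
  set vQ : Fin n → ℚ := fun k => (v k : ℚ) with hvQ
  have hcast : ∀ j, Matrix.vecMul vQ G.redLapQ j = ((Matrix.vecMul v G.redLap j : ℤ) : ℚ) := by
    intro j
    simp only [Matrix.vecMul, dotProduct, redLapQ, Matrix.map_apply, hvQ]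
    push_cast
    rfl
  have hrec : vQ = Matrix.vecMul (Matrix.vecMul vQ G.redLapQ) (G.redLapQ)⁻¹ := by
    rw [Matrix.vecMul_vecMul, redLapQ_mul_inv, Matrix.vecMul_one]
  have : 0 ≤ vQ i := by
    rw [hrec]
    show (0:ℚ) ≤ ∑ j, (Matrix.vecMul vQ G.redLapQ) j * (G.redLapQ)⁻¹ j i
    apply Finset.sum_nonneg
    intro j _
    apply mul_nonneg
    · rw [hcast]
      exact_mod_cast h j
    · exact inv_redLapQ_nonneg G j i
  have h2 : (0:ℚ) ≤ ((v i : ℤ) : ℚ) := this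
  exact_mod_cast h2

lemma single_vecMul (G : SinkDigraph n) (i : Fin n) :
    Matrix.vecMul (fun k => if k = i then (1:ℤ) else 0) G.redLap = G.redLap i := by
  funext j
  simp only [Matrix.vecMul, dotProduct]
  rw [Finset.sum_eq_single i]
  · simp
  · intro k _ hk; simp [hk]
  · intro hmem; exact absurd (Finset.mem_univ i) hmem

lemma applySeq_eq (G : SinkDigraph n) :
    ∀ (s : List (Fin n)) (x : Fin n → ℤ),
      G.applySeq x s = x - Matrix.vecMul (script s) G.redLap := by
  intro s
  induction s with
  | nil =>
      intro x
      have : script ([] : List (Fin n)) = 0 := by funext i; simp [script]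
      simp [applySeq, this]
  | cons i s ih =>
      intro x
      have hsc : script (i :: s) = (fun k => if k = i then (1:ℤ) else 0) + script s := by
        funext k
        simp only [script, Pi.add_apply, List.count_cons]
        by_cases hk : k = i
        · simp [hk]; ring
        · simp [hk, Ne.symm hk]
      have hfire : G.fire x i = x - Matrix.vecMul (fun k => if k = i then (1:ℤ) else 0) G.redLap := by
        funext j
        rw [single_vecMul]
        rfl
      rw [show G.applySeq x (i :: s) = G.applySeq (G.fire x i) s from rfl, ih, hfire, hsc,
        Matrix.add_vecMul]
      funext j
      simp only [Pi.sub_apply, Pi.add_apply]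
      ring

/-- Least action principle. -/
lemma lap_LAP (G : SinkDigraph n) :
    ∀ (s : List (Fin n)) (x : Fin n → ℤ) (v : Fin n → ℤ),
      G.Legal x s → (∀ i, 0 ≤ v i) → G.IsStable (x - Matrix.vecMul v G.redLap) →
      ∀ i, script s i ≤ v i := by
  intro s
  induction s with
  | nil => intro x v _ hv _ i; simpa [script] using hv i
  | cons i s ih =>
      intro x v hleg hv hstab j
      obtain ⟨hlegi, hlegs⟩ := hleg
      -- v i ≥ 1
      have hvi : 1 ≤ v i := by
        by_contra hlt
        push_neg at hlt
        have hvi0 : v i = 0 := le_antisymm (by omega) (hv i)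
        have hsum : Matrix.vecMul v G.redLap i ≤ 0 := by
          show (∑ k, v k * G.redLap k i) ≤ 0
          apply Finset.sum_nonpos
          intro k _
          by_cases hk : k = i
          · subst hk; rw [hvi0]; simp
          · exact mul_nonpos_of_nonneg_of_nonpos (hv k) (redLap_offdiag_nonpos G hk)
        have := (hstab i).2
        simp only [Pi.sub_apply] at this
        linarith
      set v' : Fin n → ℤ := v - (fun k => if k = i then (1:ℤ) else 0) with hv'
      have hv'0 : ∀ k, 0 ≤ v' k := by
        intro k
        by_cases hk : k = i
        · subst hk
          have : v' k = v k - 1 := by simp [hv']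
          omega
        · have : v' k = v k := by simp [hv', hk]
          rw [this]; exact hv k
      have hstab' : G.IsStable (G.fire x i - Matrix.vecMul v' G.redLap) := by
        have : G.fire x i - Matrix.vecMul v' G.redLap = x - Matrix.vecMul v G.redLap := by
          have hfire : G.fire x i = x - G.redLap i := funext fun j => rfl
          rw [hfire, hv', Matrix.sub_vecMul, single_vecMul]
          funext k
          simp only [Pi.sub_apply]
          ring
        rw [this]; exact hstab
      have hle := ih (G.fire x i) v' hlegs hv'0 hstab' j
      have hsc : script (i :: s) j = script s j + (if j = i then (1:ℤ) else 0) := by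
        simp only [script, List.count_cons]
        by_cases hk : j = i
        · simp [hk]
        · simp [hk, Ne.symm hk]
      have hv'j : v' j = v j - (if j = i then (1:ℤ) else 0) := by simp [hv']
      by_cases hk : j = i
      · rw [hsc, if_pos hk]
        rw [hv'j, if_pos hk] at hle
        omega
      · rw [hsc, if_neg hk]
        rw [hv'j, if_neg hk] at hle
        omega


end SinkDigraph

open SinkDigraph Matrix

theorem critical_max_weight (n : ℕ) (G : SinkDigraph n) (a b : Fin n → ℤ)
    (ha : G.IsCritical a) (hb : G.IsStable b) (hab : G.Equiv a b) :
    weight b ≤ weight a := by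
  obtain ⟨c, hc, s, hleg, happ, _⟩ := ha
  obtain ⟨σ, hσ⟩ := hab
  set x : Fin n → ℤ := G.cmax + c with hx
  set u : Fin n → ℤ := SinkDigraph.script s with hu
  have hax : a = x - Matrix.vecMul u G.redLap := by rw [← happ, G.applySeq_eq]
  set v : Fin n → ℤ := u - σ with hv
  have hbx : b = x - Matrix.vecMul v G.redLap := by
    have hba : b = a + Matrix.vecMul σ G.redLap := by
      funext j
      have h1 := congrFun hσ j
      simp only [Pi.sub_apply] at h1
      simp only [Pi.add_apply]
      linarith
    rw [hba, hax, hv, Matrix.sub_vecMul]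
    funext j
    simp only [Pi.sub_apply, Pi.add_apply]
    ring
  have hvD : ∀ j, 0 ≤ Matrix.vecMul v G.redLap j := by
    intro j
    have h1 : Matrix.vecMul v G.redLap j = x j - b j := by
      have h2 := congrFun hbx j
      simp only [Pi.sub_apply] at h2
      linarith
    have h2 : b j < G.redLap j j := (hb j).2
    have h3 : G.redLap j j = (G.outDeg j.castSucc : ℤ) := G.redLap_diag j
    have h4 : x j = (G.outDeg j.castSucc : ℤ) - 1 + c j := rfl
    have h5 : 0 ≤ c j := hc j
    omega
  have hv0 : ∀ i, 0 ≤ v i := G.nonneg_of_vecMul_nonneg v hvD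
  have hstabb : G.IsStable (x - Matrix.vecMul v G.redLap) := hbx ▸ hb
  have hLAP : ∀ i, u i ≤ v i := G.lap_LAP s x v hleg hv0 hstabb
  have hs0 : ∀ i, σ i ≤ 0 := by
    intro i
    have h1 := hLAP i
    have h2 : v i = u i - σ i := rfl
    omega
  have hw : weight b - weight a = ∑ i, σ i * (G.e i.castSucc (Fin.last n) : ℤ) := by
    have h1 : weight b - weight a = ∑ j, (b j - a j) := by
      rw [weight, weight, ← Finset.sum_sub_distrib]
    have h2 : ∀ j, b j - a j = Matrix.vecMul σ G.redLap j := by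
      intro j
      have := congrFun hσ j
      simpa using this
    rw [h1, Finset.sum_congr rfl fun j _ => h2 j]
    calc ∑ j, Matrix.vecMul σ G.redLap j = ∑ j, ∑ i, σ i * G.redLap i j := rfl
      _ = ∑ i, ∑ j, σ i * G.redLap i j := Finset.sum_comm
      _ = ∑ i, σ i * ∑ j, G.redLap i j := by
          exact Finset.sum_congr rfl fun i _ => (Finset.mul_sum _ _ _).symm
      _ = _ := Finset.sum_congr rfl fun i _ => by rw [G.redLap_row_sum]
  have hfin : ∑ i, σ i * (G.e i.castSucc (Fin.last n) : ℤ) ≤ 0 :=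
    Finset.sum_nonpos fun i _ =>
      mul_nonpos_of_nonpos_of_nonneg (hs0 i) (by positivity)
  linarith
end
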